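/- arXiv:math/0401324 — 2 statements merged into one kernel-verified Lean document; each statement's English description precedes it below -/
import Mathlib

section
/- Let c = s_1 s_2 ⋯ s_n be the Coxeter element of the universal Coxeter group W_n. If (t_1,…,t_n) is a tuple of reflections with t_1 t_2 ⋯ t_n = c, then the contents (middle letters of the palindromic normal forms) of t_1,…,t_n are exactly s_1,…,s_n, each occurring once. (Proof via the abelianization of W_n, which is (Z/2)^n.) -/
/-- The elementary Hurwitz move `σ_i` on `n`-tuples of a group `G`
(0-indexed: acts on entries `i` and `i+1`). -/
def hmove (n : ℕ) (G : Type*) [Group G] (i : ℕ) (hi : i + 1 < n)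
    (g : Fin n → G) : Fin n → G := fun j =>
  if (j : ℕ) = i then g ⟨i, by omega⟩ * g ⟨i + 1, hi⟩ * (g ⟨i, by omega⟩)⁻¹
  else if (j : ℕ) = i + 1 then g ⟨i, by omega⟩
  else g j

/-- One elementary step of the Hurwitz action. -/
def hstep (n : ℕ) (G : Type*) [Group G] (a b : Fin n → G) : Prop :=
  ∃ (i : ℕ) (hi : i + 1 < n), b = hmove n G i hi a

/-- Braid relations: generators `σ_1, …, σ_{n-1}` indexed by `Fin (n-1)`. -/
def braidRels (n : ℕ) : Set (FreeGroup (Fin (n - 1))) :=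
  { r | (∃ i j : Fin (n - 1), (i : ℕ) + 1 = (j : ℕ) ∧
          r = FreeGroup.of i * FreeGroup.of j * FreeGroup.of i *
            (FreeGroup.of j * FreeGroup.of i * FreeGroup.of j)⁻¹) ∨
        (∃ i j : Fin (n - 1), (i : ℕ) + 1 < (j : ℕ) ∧
          r = FreeGroup.of i * FreeGroup.of j * (FreeGroup.of j * FreeGroup.of i)⁻¹) }

/-- The braid group `B_n`. -/
abbrev BraidGroup (n : ℕ) := PresentedGroup (braidRels n)

/-- Relations of the universal Coxeter group: each generator squares to 1. -/
def coxRels (n : ℕ) : Set (FreeGroup (Fin n)) :=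
  { r | ∃ i, r = FreeGroup.of i * FreeGroup.of i }

/-- The universal Coxeter group `W_n`. -/
abbrev UCox (n : ℕ) := PresentedGroup (coxRels n)

/-- The generator `s_i` of `W_n`. -/
def sgen {n : ℕ} (i : Fin n) : UCox n := PresentedGroup.of i

/-- The Coxeter element `c = s_1 ⋯ s_n`. -/
def coxElt (n : ℕ) : UCox n := (List.ofFn fun i => sgen i).prod

/-- The set `T` of reflections of `W_n`: conjugates of generators. -/
def Refl (n : ℕ) : Set (UCox n) := { t | ∃ w i, t = w * sgen i * w⁻¹ }

/-- `Red_T(c)`: `n`-tuples of reflections with product `c`. -/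
def RedT (n : ℕ) : Set (Fin n → UCox n) :=
  { t | (∀ i, t i ∈ Refl n) ∧ (List.ofFn t).prod = coxElt n }

/-- The set `R` of braid reflections of the free group: conjugates of generators. -/
def Rset (n : ℕ) : Set (FreeGroup (Fin n)) :=
  { r | ∃ w i, r = w * FreeGroup.of i * w⁻¹ }

/-- `g = f_1 ⋯ f_n`. -/
def gElt (n : ℕ) : FreeGroup (Fin n) := (List.ofFn fun i => FreeGroup.of i).prod

/-- `Red_R(g)`: `n`-tuples from `R` with product `g`. -/
def RedR (n : ℕ) : Set (Fin n → FreeGroup (Fin n)) :=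
  { t | (∀ i, t i ∈ Rset n) ∧ (List.ofFn t).prod = gElt n }

/-- The canonical projection `π : F_n → W_n`, `f_i ↦ s_i`. -/
def pr (n : ℕ) : FreeGroup (Fin n) →* UCox n := FreeGroup.lift fun i => sgen i

/-- Length of an element of `W_n`: the length of its normal form. -/
noncomputable def wordLength {n : ℕ} (w : UCox n) : ℕ :=
  sInf { m | ∃ l : List (Fin n),
    List.Chain' (· ≠ ·) l ∧ l.length = m ∧ (l.map sgen).prod = w }

/-!
A reflection `w s_j w⁻¹` has a palindromic normal form: take a reduced word for `w`, cancelling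
a final `s_j` if there is one. Its content is then read off in the abelianization
`W_n → (ℤ/2)^n`, `s_i ↦ e_i`, where the reflection maps to `e_j`. Applied to
`t_1 ⋯ t_n = s_1 ⋯ s_n`, this gives `∑ e_{cont i} = (1, …, 1)`, so every generator is a content,
and the map `i ↦ cont i` on `Fin n` is onto, hence bijective.
-/

variable {n : ℕ}

theorem sgen_mul_self (i : Fin n) : sgen i * sgen i = 1 := by
  have h : PresentedGroup.mk (coxRels n) (FreeGroup.of i * FreeGroup.of i) = 1 :=
    (QuotientGroup.eq_one_iff _).mpr (Subgroup.subset_normalClosure ⟨i, rfl⟩)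
  simpa [sgen, PresentedGroup.of, map_mul] using h

theorem sgen_inv (i : Fin n) : (sgen i)⁻¹ = sgen i :=
  inv_eq_of_mul_eq_one_right (sgen_mul_self i)

theorem prod_reverse_map_sgen (l : List (Fin n)) :
    (l.reverse.map sgen).prod = (l.map sgen).prod⁻¹ := by
  rw [List.map_reverse, List.prod_inv_reverse, List.map_map]
  simp only [Function.comp_def, sgen_inv]

theorem prod_map_sgen_palindrome (u : List (Fin n)) (c : Fin n) :
    ((u ++ c :: u.reverse).map sgen).prod = (u.map sgen).prod * sgen c * (u.map sgen).prod⁻¹ := by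
  rw [List.map_append, List.prod_append, List.map_cons, List.prod_cons,
    prod_reverse_map_sgen, mul_assoc]

theorem exists_isChain_prod_eq_sgen_mul (i : Fin n) {w : UCox n}
    (hw : ∃ l : List (Fin n), l.IsChain (· ≠ ·) ∧ (l.map sgen).prod = w) :
    ∃ l : List (Fin n), l.IsChain (· ≠ ·) ∧ (l.map sgen).prod = sgen i * w := by
  obtain ⟨l, hl, rfl⟩ := hw
  by_cases hhead : l.head? = some i
  · obtain ⟨l', rfl⟩ : ∃ l', l = i :: l' := by
      cases l <;> simp_all
    refine ⟨l', hl.tail, ?_⟩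
    rw [List.map_cons, List.prod_cons, ← mul_assoc, sgen_mul_self, one_mul]
  · exact ⟨i :: l, hl.cons fun j hj hij => hhead (hij ▸ hj), rfl⟩

theorem exists_isChain_prod_eq (w : UCox n) :
    ∃ l : List (Fin n), l.IsChain (· ≠ ·) ∧ (l.map sgen).prod = w := by
  have hw : w ∈ Subgroup.closure (Set.range sgen) := by
    change w ∈ Subgroup.closure (Set.range PresentedGroup.of)
    rw [PresentedGroup.closure_range_of]
    exact Subgroup.mem_top w
  induction hw using Subgroup.closure_induction_left with
  | one => exact ⟨[], .nil, rfl⟩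
  | mul_left _ hx _ _ ih =>
    obtain ⟨i, rfl⟩ := hx
    exact exists_isChain_prod_eq_sgen_mul i ih
  | inv_mul_cancel _ hx _ _ ih =>
    obtain ⟨i, rfl⟩ := hx
    rw [sgen_inv]
    exact exists_isChain_prod_eq_sgen_mul i ih

theorem exists_isChain_cons_conj_eq (a : UCox n) (j : Fin n) :
    ∃ v : List (Fin n), (j :: v).IsChain (· ≠ ·) ∧
      (v.map sgen).prod⁻¹ * sgen j * (v.map sgen).prod = a⁻¹ * sgen j * a := by
  obtain ⟨l, hl, rfl⟩ := exists_isChain_prod_eq a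
  by_cases hhead : l.head? = some j
  · obtain ⟨v, rfl⟩ : ∃ v, l = j :: v := by
      cases l <;> simp_all
    refine ⟨v, hl, ?_⟩
    simp only [List.map_cons, List.prod_cons, mul_inv_rev, sgen_inv, mul_assoc, sgen_mul_self,
      mul_one]
  · exact ⟨l, hl.cons fun i hi hji => hhead (hji ▸ hi), rfl⟩

theorem List.IsChain.reverse_append_cons {α : Type*} {R : α → α → Prop} [Std.Symm R]
    {a : α} {l : List α} (h : (a :: l).IsChain R) : (l.reverse ++ a :: l).IsChain R := by
  have h' : (l.reverse ++ [a]).IsChain R := by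
    rw [← List.reverse_cons, List.isChain_reverse]
    exact h.imp fun _ _ => Std.Symm.symm _ _
  simpa using h'.append_overlap h (List.cons_ne_nil a [])

theorem exists_palindrome_of_mem_refl {t : UCox n} (ht : t ∈ Refl n) :
    ∃ (c : Fin n) (u : List (Fin n)), (u ++ c :: u.reverse).IsChain (· ≠ ·) ∧
      ((u ++ c :: u.reverse).map sgen).prod = t := by
  obtain ⟨w, j, rfl⟩ := ht
  obtain ⟨v, hv, hconj⟩ := exists_isChain_cons_conj_eq w⁻¹ j
  refine ⟨j, v.reverse, ?_, ?_⟩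
  · rw [List.reverse_reverse]
    exact hv.reverse_append_cons
  · rw [prod_map_sgen_palindrome, prod_reverse_map_sgen, inv_inv, hconj, inv_inv]

theorem map_list_prod_ofFn {G M : Type*} [Monoid G] [CommMonoid M] (f : G →* M) {k : ℕ}
    (g : Fin k → G) : f (List.ofFn g).prod = ∏ i, f (g i) := by
  rw [map_list_prod, List.map_ofFn, List.prod_ofFn, Function.comp_def]

/-- The abelianization map `W_n → (ℤ/2)^n`. -/
noncomputable def parity (n : ℕ) : UCox n →* Multiplicative (Fin n → ZMod 2) :=
  PresentedGroup.toGroup (f := fun i => Multiplicative.ofAdd (Pi.single i 1)) <| by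
    rintro _ ⟨i, rfl⟩
    rw [map_mul, FreeGroup.lift_apply_of, ← ofAdd_add, ← Pi.single_add,
      show (1 : ZMod 2) + 1 = 0 by decide, Pi.single_zero, ofAdd_zero]

theorem parity_sgen (i : Fin n) : parity n (sgen i) = .ofAdd (Pi.single i 1) :=
  PresentedGroup.toGroup.of _

theorem parity_conj_sgen (w : UCox n) (i : Fin n) :
    parity n (w * sgen i * w⁻¹) = .ofAdd (Pi.single i 1) := by
  rw [map_mul, map_mul, map_inv, mul_inv_cancel_comm, parity_sgen]

theorem Function.surjective_of_sum_pi_single_eq_one {ι κ : Type*} [Fintype ι] [DecidableEq κ]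
    {f : ι → κ} (h : (∑ i, Pi.single (f i) 1 : κ → ZMod 2) = 1) : Function.Surjective f := by
  intro k
  by_contra! hk
  simpa [Finset.sum_apply, Pi.single_apply, Ne.symm (hk _)] using congrFun h k

/-- If `(t_1,…,t_n)` is a tuple of reflections with product the Coxeter element `c`,
then the contents (middle letters of the palindromic normal forms) are exactly
`s_1,…,s_n`, each occurring once. -/
theorem contents_are_all_generators (n : ℕ) (t : Fin n → UCox n) (ht : t ∈ RedT n) :
    ∃ cont : Fin n → Fin n, Function.Bijective cont ∧
      ∀ i, ∃ u : List (Fin n),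
        List.Chain' (· ≠ ·) (u ++ cont i :: u.reverse) ∧
        ((u ++ cont i :: u.reverse).map sgen).prod = t i := by
  obtain ⟨hrefl, hprod⟩ := ht
  choose cont u hchain hpal using fun i => exists_palindrome_of_mem_refl (hrefl i)
  refine ⟨cont, ?_, fun i => ⟨u i, hchain i, hpal i⟩⟩
  have hparity : ∏ i, parity n (t i) = ∏ i, parity n (sgen i) := by
    rw [← map_list_prod_ofFn, hprod, coxElt, map_list_prod_ofFn]
  simp only [← hpal, prod_map_sgen_palindrome, parity_conj_sgen, parity_sgen, ← ofAdd_sum,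
    EmbeddingLike.apply_eq_iff_eq, Finset.univ_sum_single] at hparity
  exact Finite.surjective_iff_bijective.mp (Function.surjective_of_sum_pi_single_eq_one hparity)
end

section
/- The Hurwitz action of the braid group B_n is transitive on the set Red_T(c) of n-tuples of reflections of the universal Coxeter group W_n whose product equals the Coxeter element c = s_1 ⋯ s_n. -/
/-!
Every element of `W_n` has a unique reduced (alternating) word, and that of a reflection is an odd
palindrome `U y Uᴿ`. Measure a tuple by the total length of its entries. If two neighbours overlap,
i.e. the half `U y` of the shorter one is a prefix of the reduced word of the longer one, then
conjugating the longer one by the shorter one (a Hurwitz move `σ_i` or `σ_i⁻¹`) strictly shortens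
it; equal lengths would force the two neighbours to coincide, which is impossible in `Red_T(c)`
because there the entries map to distinct basis vectors of the abelianization `(ℤ/2)ⁿ`. If no
neighbours overlap, no half `U y` cancels in the product `t_1 ⋯ t_n`, so its length is at least
`n + 2 max |U|`; as `ℓ(c) = n`, every `t_i` is a simple reflection and the tuple is
`(s_1, …, s_n)`, to which every tuple is therefore connected.
-/

theorem List.exists_take_eq_and_getElem?_ne {α : Type*} {l₁ l₂ : List α} {k : ℕ}
    (h : l₁.take k ≠ l₂.take k) : ∃ m < k, l₁.take m = l₂.take m ∧ l₁[m]? ≠ l₂[m]? := by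
  induction k with
  | zero => exact absurd rfl h
  | succ k ih =>
    by_cases hk : l₁.take k = l₂.take k
    · refine ⟨k, k.lt_succ_self, hk, fun he => h ?_⟩
      rw [List.take_add_one, List.take_add_one, hk, he]
    · obtain ⟨m, hm, hm'⟩ := ih hk
      exact ⟨m, by omega, hm'⟩

theorem List.exists_eq_append_cons_reverse {α : Type*} {l : List α} (hl : l.reverse = l)
    (hodd : Odd l.length) : ∃ U y, l = U ++ y :: U.reverse := by
  obtain ⟨d, hd⟩ := hodd
  refine ⟨l.take d, l[d], ?_⟩
  have hdrop : l.drop (d + 1) = (l.take d).reverse := by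
    rw [List.reverse_take, hl, show l.length - d = d + 1 by omega]
  rw [← hdrop, ← List.drop_eq_getElem_cons, List.take_append_drop]

theorem List.take_length_add_one_append_cons {α : Type*} (U W : List α) (y : α) :
    (U ++ y :: W).take (U.length + 1) = U ++ [y] := by
  rw [List.take_length_add_append]
  rfl

theorem List.ofFn_eq_take_append_cons_cons {α : Type*} {n : ℕ} (i : ℕ) (hi : i + 1 < n)
    (g : Fin n → α) :
    List.ofFn g = (List.ofFn g).take i ++ g ⟨i, by omega⟩ :: g ⟨i + 1, hi⟩ ::
      (List.ofFn g).drop (i + 2) := by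
  apply List.ext_getElem (by simp only [List.length_append, List.length_take, List.length_cons,
    List.length_drop, List.length_ofFn]; omega)
  intro j h₁ h₂
  simp only [List.getElem_ofFn, List.getElem_append, List.getElem_cons, List.length_take,
    List.length_ofFn, List.getElem_take, List.getElem_drop]
  split_ifs <;> first | rfl | (congr 1; ext; simp; omega)

section HurwitzMove

variable {n : ℕ} {G : Type*} [Group G]

def hmoveInv (n : ℕ) (G : Type*) [Group G] (i : ℕ) (hi : i + 1 < n)
    (g : Fin n → G) : Fin n → G := fun j =>
  if (j : ℕ) = i then g ⟨i + 1, hi⟩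
  else if (j : ℕ) = i + 1 then (g ⟨i + 1, hi⟩)⁻¹ * g ⟨i, by omega⟩ * g ⟨i + 1, hi⟩
  else g j

@[simp]
theorem hmoveInv_apply_self (i : ℕ) (hi : i + 1 < n) (g : Fin n → G) :
    hmoveInv n G i hi g ⟨i, by omega⟩ = g ⟨i + 1, hi⟩ := by
  simp [hmoveInv]

@[simp]
theorem hmoveInv_apply_succ (i : ℕ) (hi : i + 1 < n) (g : Fin n → G) :
    hmoveInv n G i hi g ⟨i + 1, hi⟩ = (g ⟨i + 1, hi⟩)⁻¹ * g ⟨i, by omega⟩ * g ⟨i + 1, hi⟩ := by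
  simp [hmoveInv]

theorem hmove_hmoveInv (i : ℕ) (hi : i + 1 < n) (g : Fin n → G) :
    hmove n G i hi (hmoveInv n G i hi g) = g := by
  funext ⟨j, hj⟩
  by_cases h : j = i
  · subst h
    simp [hmove, mul_assoc]
  by_cases h' : j = i + 1
  · subst h'
    simp [hmove]
  simp [hmove, hmoveInv, h, h']

theorem ofFn_hmove (i : ℕ) (hi : i + 1 < n) (g : Fin n → G) :
    List.ofFn (hmove n G i hi g) = (List.ofFn g).take i ++
      g ⟨i, by omega⟩ * g ⟨i + 1, hi⟩ * (g ⟨i, by omega⟩)⁻¹ :: g ⟨i, by omega⟩ ::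
        (List.ofFn g).drop (i + 2) := by
  apply List.ext_getElem (by simp only [List.length_append, List.length_take, List.length_cons,
    List.length_drop, List.length_ofFn]; omega)
  intro j h₁ h₂
  simp only [List.getElem_ofFn, hmove, List.getElem_append, List.getElem_cons, List.length_take,
    List.length_ofFn, List.getElem_take, List.getElem_drop]
  split_ifs <;> first | rfl | omega | (congr 2; omega)

theorem prod_ofFn_hmove (i : ℕ) (hi : i + 1 < n) (g : Fin n → G) :
    (List.ofFn (hmove n G i hi g)).prod = (List.ofFn g).prod := by
  conv_rhs => rw [List.ofFn_eq_take_append_cons_cons i hi g]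
  rw [ofFn_hmove]
  simp [mul_assoc]

theorem sum_map_ofFn_hmove {M : Type*} [AddCommMonoid M] (f : G → M) (i : ℕ) (hi : i + 1 < n)
    (g : Fin n → G) :
    ((List.ofFn (hmove n G i hi g)).map f).sum + f (g ⟨i + 1, hi⟩) =
      ((List.ofFn g).map f).sum + f (g ⟨i, by omega⟩ * g ⟨i + 1, hi⟩ * (g ⟨i, by omega⟩)⁻¹) := by
  conv_rhs => rw [List.ofFn_eq_take_append_cons_cons i hi g]
  rw [ofFn_hmove]
  simp only [List.map_append, List.map_cons, List.sum_append, List.sum_cons]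
  abel

end HurwitzMove

namespace UCox

variable {n : ℕ}

def lift {G : Type*} [Group G] (f : Fin n → G) (hf : ∀ i, f i * f i = 1) : UCox n →* G :=
  PresentedGroup.toGroup (f := f) (by rintro _ ⟨i, rfl⟩; simpa using hf i)

@[simp]
theorem lift_sgen {G : Type*} [Group G] (f : Fin n → G) (hf : ∀ i, f i * f i = 1) (i : Fin n) :
    lift f hf (sgen i) = f i :=
  PresentedGroup.toGroup.of _

@[simp]
theorem sgen_mul_self (i : Fin n) : sgen i * sgen i = 1 :=
  (map_mul _ _ _).symm.trans (PresentedGroup.one_of_mem ⟨i, rfl⟩)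

@[simp]
theorem sgen_mul_sgen_mul (i : Fin n) (w : UCox n) : sgen i * (sgen i * w) = w := by
  rw [← mul_assoc, sgen_mul_self, one_mul]

@[simp]
theorem sgen_inv (i : Fin n) : (sgen i)⁻¹ = sgen i :=
  inv_eq_of_mul_eq_one_right (sgen_mul_self i)

def wordProd (l : List (Fin n)) : UCox n := (l.map sgen).prod

@[simp] theorem wordProd_nil : wordProd ([] : List (Fin n)) = 1 := rfl

@[simp]
theorem wordProd_cons (i : Fin n) (l : List (Fin n)) : wordProd (i :: l) = sgen i * wordProd l :=
  List.prod_cons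

@[simp]
theorem wordProd_append (l₁ l₂ : List (Fin n)) :
    wordProd (l₁ ++ l₂) = wordProd l₁ * wordProd l₂ := by
  simp [wordProd]

@[simp]
theorem wordProd_reverse (l : List (Fin n)) : wordProd l.reverse = (wordProd l)⁻¹ := by
  induction l with
  | nil => simp
  | cons i l ih => simp [ih]

theorem wordProd_surjective : Function.Surjective (wordProd (n := n)) := by
  intro w
  induction w using PresentedGroup.induction_on with | H z => ?_
  induction z using FreeGroup.induction_on with
  | C1 => exact ⟨[], rfl⟩
  | of i => exact ⟨[i], List.prod_singleton⟩
  | inv_of i _ => exact ⟨[i], List.prod_singleton.trans (sgen_inv i).symm⟩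
  | mul x y hx hy =>
    obtain ⟨lx, hlx⟩ := hx
    obtain ⟨ly, hly⟩ := hy
    exact ⟨lx ++ ly, by rw [wordProd_append, hlx, hly, map_mul]⟩

abbrev IsReduced (l : List (Fin n)) : Prop := l.IsChain (· ≠ ·)

def cancelCons (i : Fin n) : List (Fin n) → List (Fin n)
  | [] => [i]
  | a :: l => if a = i then l else i :: a :: l

theorem IsReduced.cancelCons (i : Fin n) {l : List (Fin n)} (h : IsReduced l) :
    IsReduced (cancelCons i l) := by
  cases l with
  | nil => simp [UCox.cancelCons]
  | cons a l =>
    by_cases hai : a = i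
    · simpa [UCox.cancelCons, hai] using h.tail
    · simpa [UCox.cancelCons, hai, Ne.symm hai] using h

theorem cancelCons_cancelCons (i : Fin n) {l : List (Fin n)} (h : IsReduced l) :
    cancelCons i (cancelCons i l) = l := by
  cases l with
  | nil => simp [cancelCons]
  | cons a l =>
    by_cases hai : a = i
    · subst hai
      cases l with
      | nil => simp [cancelCons]
      | cons b l => simp [cancelCons, Ne.symm (List.isChain_cons_cons.1 h).1]
    · simp [cancelCons, hai]

theorem wordProd_cancelCons (i : Fin n) (l : List (Fin n)) :
    wordProd (cancelCons i l) = sgen i * wordProd l := by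
  cases l with
  | nil => simp [cancelCons]
  | cons a l => by_cases hai : a = i <;> simp [cancelCons, hai]

theorem length_cancelCons_le (i : Fin n) (l : List (Fin n)) :
    (cancelCons i l).length ≤ l.length + 1 := by
  cases l with
  | nil => simp [cancelCons]
  | cons a l =>
    by_cases hai : a = i
    · simp only [cancelCons, hai, if_true, List.length_cons]
      omega
    · simp [cancelCons, hai]

def ReducedWord (n : ℕ) := { l : List (Fin n) // IsReduced l }

def sgenPerm (i : Fin n) : Equiv.Perm (ReducedWord n) where
  toFun l := ⟨cancelCons i l.1, l.2.cancelCons i⟩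
  invFun l := ⟨cancelCons i l.1, l.2.cancelCons i⟩
  left_inv l := Subtype.ext (cancelCons_cancelCons i l.2)
  right_inv l := Subtype.ext (cancelCons_cancelCons i l.2)

/-- Van der Waerden's trick: `W_n` acts on reduced words, `s_i` prepending `i` with
cancellation. -/
def reducedWordAction : UCox n →* Equiv.Perm (ReducedWord n) :=
  lift sgenPerm fun i => Equiv.ext fun l => Subtype.ext (cancelCons_cancelCons i l.2)

def nf (w : UCox n) : List (Fin n) := (reducedWordAction w ⟨[], List.isChain_nil⟩).1

theorem isReduced_nf (w : UCox n) : IsReduced (nf w) := (reducedWordAction w _).2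

theorem nf_sgen_mul (i : Fin n) (w : UCox n) : nf (sgen i * w) = cancelCons i (nf w) := by
  simp only [nf, map_mul, reducedWordAction, lift_sgen]
  rfl

theorem nf_wordProd {l : List (Fin n)} (hl : IsReduced l) : nf (wordProd l) = l := by
  induction l with
  | nil => rfl
  | cons i l ih =>
    rw [wordProd_cons, nf_sgen_mul, ih hl.tail]
    cases l with
    | nil => rfl
    | cons a l => simp [cancelCons, Ne.symm (List.isChain_cons_cons.1 hl).1]

@[simp]
theorem wordProd_nf (w : UCox n) : wordProd (nf w) = w := by
  obtain ⟨l, rfl⟩ := wordProd_surjective w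
  induction l with
  | nil => rfl
  | cons i l ih => rw [wordProd_cons, nf_sgen_mul, wordProd_cancelCons, ih]

theorem nf_injective : Function.Injective (nf (n := n)) :=
  Function.LeftInverse.injective wordProd_nf

theorem length_nf_wordProd_le (l : List (Fin n)) : (nf (wordProd l)).length ≤ l.length := by
  induction l with
  | nil => rw [nf_wordProd List.isChain_nil]
  | cons i l ih =>
    rw [wordProd_cons, nf_sgen_mul]
    exact (length_cancelCons_le _ _).trans (by simpa using ih)

theorem nf_inv (w : UCox n) : nf w⁻¹ = (nf w).reverse := by
  have h : IsReduced (nf w).reverse :=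
    List.isChain_reverse.2 ((isReduced_nf w).imp fun _ _ h => Ne.symm h)
  conv_lhs => rw [← wordProd_nf w, ← wordProd_reverse, nf_wordProd h]

theorem nf_coxElt : nf (coxElt n) = List.finRange n := by
  rw [coxElt, List.ofFn_eq_map]
  exact nf_wordProd (List.nodup_finRange n).isChain

theorem conj_mem_Refl (x : UCox n) {t : UCox n} (ht : t ∈ Refl n) : x * t * x⁻¹ ∈ Refl n := by
  obtain ⟨w, i, rfl⟩ := ht
  exact ⟨x * w, i, by group⟩

theorem inv_eq_self_of_mem_Refl {t : UCox n} (ht : t ∈ Refl n) : t⁻¹ = t := by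
  obtain ⟨w, i, rfl⟩ := ht
  simp [mul_assoc]

def parity : UCox n →* Multiplicative (ZMod 2) :=
  lift (fun _ => Multiplicative.ofAdd 1) fun _ => rfl

theorem parity_wordProd (l : List (Fin n)) :
    parity (wordProd l) = Multiplicative.ofAdd (l.length : ZMod 2) := by
  induction l with
  | nil => rfl
  | cons i l ih =>
    rw [wordProd_cons, map_mul, ih, parity, lift_sgen, ← ofAdd_add, List.length_cons,
      Nat.cast_succ, add_comm]

theorem odd_length_nf_of_mem_Refl {t : UCox n} (ht : t ∈ Refl n) : Odd (nf t).length := by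
  obtain ⟨w, i, rfl⟩ := ht
  have h := parity_wordProd (nf (w * sgen i * w⁻¹))
  rw [wordProd_nf, map_mul, map_mul, map_inv, mul_inv_cancel_comm, parity, lift_sgen] at h
  exact ZMod.natCast_eq_one_iff_odd.1 (Multiplicative.ofAdd.injective h).symm

theorem reverse_nf_of_mem_Refl {t : UCox n} (ht : t ∈ Refl n) : (nf t).reverse = nf t := by
  rw [← nf_inv, inv_eq_self_of_mem_Refl ht]

theorem exists_nf_eq_of_mem_Refl {t : UCox n} (ht : t ∈ Refl n) :
    ∃ U y, nf t = U ++ y :: U.reverse :=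
  List.exists_eq_append_cons_reverse (reverse_nf_of_mem_Refl ht) (odd_length_nf_of_mem_Refl ht)

def halfLen (t : UCox n) : ℕ := (nf t).length / 2

theorem length_nf_of_mem_Refl {t : UCox n} (ht : t ∈ Refl n) :
    (nf t).length = 2 * halfLen t + 1 := by
  obtain ⟨d, hd⟩ := odd_length_nf_of_mem_Refl ht
  unfold halfLen
  omega

theorem halfLen_eq_of_nf_eq {t : UCox n} {U : List (Fin n)} {y : Fin n}
    (h : nf t = U ++ y :: U.reverse) : halfLen t = U.length := by
  simp only [halfLen, h, List.length_append, List.length_cons, List.length_reverse]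
  omega

/-- Multiplying `w` on the left by `t` cancels the common prefix `(nf t).take m = (nf w).take m`
against the matching suffix of the palindrome `nf t`, and nothing more. -/
theorem nf_mul_of_reverse_nf_eq {t w : UCox n} (hpal : (nf t).reverse = nf t) {m : ℕ}
    (hm : m < (nf t).length) (htake : (nf t).take m = (nf w).take m)
    (hne : (nf t)[m]? ≠ (nf w)[m]?) :
    nf (t * w) = (nf t).take ((nf t).length - m) ++ (nf w).drop m := by
  set a := nf t
  set X := nf w
  have hdrop : a.drop (a.length - m) = (X.take m).reverse := by
    rw [← htake, List.reverse_take, hpal]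
  have hprod : t * w = wordProd (a.take (a.length - m) ++ X.drop m) := by
    calc t * w = wordProd (a.take (a.length - m) ++ a.drop (a.length - m)) *
        wordProd (X.take m ++ X.drop m) := by simp only [List.take_append_drop, wordProd_nf, a, X]
      _ = _ := by
        simp only [wordProd_append, hdrop, wordProd_reverse, mul_assoc, inv_mul_cancel_left]
  have hlast : (a.take (a.length - m)).getLast? = a[m]? := by
    have hmid : a[a.length - m - 1]? = a[m]? := by
      conv_rhs => rw [← hpal, List.getElem?_reverse (by simpa using hm)]
      congr 1
      omega
    rw [List.getLast?_take, if_neg (by omega), hmid, List.getElem?_eq_getElem hm, Option.some_or]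
  have hred : IsReduced (a.take (a.length - m) ++ X.drop m) := by
    refine List.isChain_append.2 ⟨(isReduced_nf t).take _, (isReduced_nf w).drop _, ?_⟩
    rintro x hx y hy rfl
    rw [hlast] at hx
    rw [List.head?_drop] at hy
    exact hne ((Option.mem_def.1 hx).trans (Option.mem_def.1 hy).symm)
  rw [hprod, nf_wordProd hred]

/-- For reflections with reduced words `U y Uᴿ` and `U' y' U'ᴿ`, the half `U y` of the shorter one
is a prefix of `U' y' U'ᴿ`. -/
def Overlap (x y : UCox n) : Prop :=
  (nf x).take (min (halfLen x) (halfLen y) + 1) = (nf y).take (min (halfLen x) (halfLen y) + 1)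

theorem Overlap.symm {x y : UCox n} (h : Overlap x y) : Overlap y x := by
  unfold Overlap at *
  rw [min_comm]
  exact h.symm

/-- The second conjunct, that the product keeps the half `U y` of its first factor, carries the
induction. -/
theorem length_nf_prod_cons_of_isChain (ts : List (UCox n)) (t : UCox n)
    (hrefl : ∀ x ∈ t :: ts, x ∈ Refl n) (hchain : (t :: ts).IsChain fun x y => ¬Overlap x y) :
    (∀ x ∈ t :: ts, (t :: ts).length + 2 * halfLen x ≤ (nf (t :: ts).prod).length) ∧
      (nf (t :: ts).prod).take (halfLen t + 1) = (nf t).take (halfLen t + 1) := by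
  induction ts generalizing t with
  | nil =>
    have := length_nf_of_mem_Refl (hrefl t (List.mem_singleton_self t))
    refine ⟨fun x hx => ?_, by rw [List.prod_singleton]⟩
    rw [List.mem_singleton.1 hx, List.prod_singleton, List.length_singleton]
    omega
  | cons t' ts ih =>
    obtain ⟨hnov, hchain'⟩ := List.isChain_cons_cons.1 hchain
    obtain ⟨hlen, hpre⟩ := ih t' (fun x hx => hrefl x (List.mem_cons_of_mem t hx)) hchain'
    have ht := hrefl t List.mem_cons_self
    set X := nf (t' :: ts).prod with hXdef
    have hX := hlen t' List.mem_cons_self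
    set k := min (halfLen t) (halfLen t') + 1
    have htake : X.take k = (nf t').take k := by
      have hk : ∀ l : List (Fin n), l.take k = (l.take (halfLen t' + 1)).take k := fun l => by
        rw [List.take_take, min_eq_left (by omega)]
      rw [hk X, hpre, ← hk]
    have hdiff : (nf t).take k ≠ X.take k := htake ▸ hnov
    obtain ⟨m, hmk, hm, hne⟩ := List.exists_take_eq_and_getElem?_ne hdiff
    have hd := length_nf_of_mem_Refl ht
    have hmul := nf_mul_of_reverse_nf_eq (reverse_nf_of_mem_Refl ht) (by omega) hm hne
    rw [List.prod_cons, hmul, ← hXdef]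
    have hmd : m ≤ min (halfLen t) (halfLen t') := Nat.lt_succ_iff.1 hmk
    refine ⟨fun x hx => ?_, ?_⟩
    · simp only [List.length_append, List.length_take, List.length_drop, List.length_cons] at hX ⊢
      rcases List.mem_cons.1 hx with hx | hx
      · subst hx
        omega
      · have := hlen x hx
        simp only [List.length_cons] at this
        omega
    · rw [List.take_append_of_le_length (by simp only [List.length_take]; omega), List.take_take,
        min_eq_left (by omega)]

theorem add_two_mul_halfLen_le_length_nf_prod (ts : List (UCox n))
    (hrefl : ∀ x ∈ ts, x ∈ Refl n) (hchain : ts.IsChain fun x y => ¬Overlap x y) :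
    ∀ x ∈ ts, ts.length + 2 * halfLen x ≤ (nf ts.prod).length := by
  cases ts with
  | nil => simp
  | cons t ts => exact (length_nf_prod_cons_of_isChain ts t hrefl hchain).1

theorem length_nf_conj_lt_of_overlap {τ τ' : UCox n} (hτ : τ ∈ Refl n) (hτ' : τ' ∈ Refl n)
    (hlt : halfLen τ < halfLen τ') (hov : Overlap τ τ') :
    (nf (τ * τ' * τ)).length < (nf τ').length := by
  obtain ⟨U, y, hU⟩ := exists_nf_eq_of_mem_Refl hτ
  obtain ⟨U', z, hU'⟩ := exists_nf_eq_of_mem_Refl hτ'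
  rw [halfLen_eq_of_nf_eq hU, halfLen_eq_of_nf_eq hU'] at hlt
  have hpre : U'.take (U.length + 1) = U ++ [y] := by
    unfold Overlap at hov
    rw [halfLen_eq_of_nf_eq hU, halfLen_eq_of_nf_eq hU', min_eq_left hlt.le, hU, hU',
      List.take_length_add_one_append_cons, List.take_append_of_le_length (by omega)] at hov
    exact hov.symm
  obtain ⟨V, hV⟩ : ∃ V, U' = U ++ y :: V :=
    ⟨U'.drop (U.length + 1), by rw [← List.take_append_drop (U.length + 1) U', hpre]; simp⟩
  have hconj : τ * τ' * τ = wordProd ((U ++ V) ++ z :: (U ++ V).reverse) := by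
    rw [← wordProd_nf τ, ← wordProd_nf τ', hU, hU', hV]
    simp [mul_assoc]
  calc (nf (τ * τ' * τ)).length ≤ ((U ++ V) ++ z :: (U ++ V).reverse).length :=
        hconj ▸ length_nf_wordProd_le _
    _ < (nf τ').length := by simp [hU', hV]

theorem eq_of_overlap_of_halfLen_eq {τ τ' : UCox n} (hτ : τ ∈ Refl n) (hτ' : τ' ∈ Refl n)
    (heq : halfLen τ = halfLen τ') (hov : Overlap τ τ') : τ = τ' := by
  obtain ⟨U, y, hU⟩ := exists_nf_eq_of_mem_Refl hτ
  obtain ⟨U', z, hU'⟩ := exists_nf_eq_of_mem_Refl hτ'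
  rw [halfLen_eq_of_nf_eq hU, halfLen_eq_of_nf_eq hU'] at heq
  unfold Overlap at hov
  rw [halfLen_eq_of_nf_eq hU, halfLen_eq_of_nf_eq hU', ← heq, min_self, hU, hU',
    List.take_length_add_one_append_cons, heq, List.take_length_add_one_append_cons] at hov
  obtain ⟨rfl, hyz⟩ := List.append_inj hov heq
  apply nf_injective
  rw [hU, hU', List.singleton_inj.1 hyz]

def abelMap : UCox n →* Multiplicative (Fin n → ZMod 2) :=
  lift (fun i => Multiplicative.ofAdd (Pi.single i 1)) fun i => by
    rw [← ofAdd_add, ← Pi.single_add, show (1 : ZMod 2) + 1 = 0 from rfl, Pi.single_zero, ofAdd_zero]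

theorem abelMap_coxElt : abelMap (coxElt n) = Multiplicative.ofAdd 1 := by
  rw [coxElt, map_list_prod, List.map_ofFn, List.prod_ofFn]
  simp only [Function.comp_apply, abelMap, lift_sgen, ← ofAdd_sum, Finset.univ_sum_single]
  rfl

theorem injective_of_mem_RedT {t : Fin n → UCox n} (ht : t ∈ RedT n) : Function.Injective t := by
  choose w μ hμ using ht.1
  have habel : ∀ j, abelMap (t j) = Multiplicative.ofAdd (Pi.single (μ j) 1) := fun j => by
    rw [hμ j, map_mul, map_mul, map_inv, mul_inv_cancel_comm, abelMap, lift_sgen]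
  have hsum : ∑ j, (Pi.single (μ j) 1 : Fin n → ZMod 2) = 1 := by
    have h := congrArg abelMap ht.2
    rw [abelMap_coxElt, map_list_prod, List.map_ofFn, List.prod_ofFn] at h
    simpa [habel, ← ofAdd_sum] using h
  have hμsurj : Function.Surjective μ := by
    intro k
    by_contra! hk
    have := congrFun hsum k
    simp [Finset.sum_apply, hk] at this
  intro j j' hjj'
  apply Finite.injective_iff_surjective.2 hμsurj
  have h := congrFun (Multiplicative.ofAdd.injective ((habel j).symm.trans (hjj' ▸ habel j'))) (μ j)
  by_contra hne
  simp [Ne.symm hne] at h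

theorem hmove_mem_RedT {t : Fin n → UCox n} (ht : t ∈ RedT n) (i : ℕ) (hi : i + 1 < n) :
    hmove n (UCox n) i hi t ∈ RedT n := by
  refine ⟨fun j => ?_, by rw [prod_ofFn_hmove]; exact ht.2⟩
  unfold hmove
  split_ifs
  exacts [conj_mem_Refl _ (ht.1 _), ht.1 _, ht.1 _]

theorem hmoveInv_mem_RedT {t : Fin n → UCox n} (ht : t ∈ RedT n) (i : ℕ) (hi : i + 1 < n) :
    hmoveInv n (UCox n) i hi t ∈ RedT n := by
  refine ⟨fun j => ?_, by rw [← prod_ofFn_hmove i hi, hmove_hmoveInv]; exact ht.2⟩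
  unfold hmoveInv
  split_ifs
  · exact ht.1 _
  · simpa using conj_mem_Refl (t ⟨i + 1, hi⟩)⁻¹ (ht.1 ⟨i, by omega⟩)
  · exact ht.1 _

def totalLength (t : Fin n → UCox n) : ℕ := ((List.ofFn t).map fun x => (nf x).length).sum

theorem exists_totalLength_lt_of_overlap {t : Fin n → UCox n} (ht : t ∈ RedT n) {i : ℕ}
    (hi : i + 1 < n) (hov : Overlap (t ⟨i, by omega⟩) (t ⟨i + 1, hi⟩)) :
    ∃ t' ∈ RedT n, Relation.EqvGen (hstep n (UCox n)) t t' ∧ totalLength t' < totalLength t := by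
  have ha := ht.1 ⟨i, by omega⟩
  have hb := ht.1 ⟨i + 1, hi⟩
  rcases lt_trichotomy (halfLen (t ⟨i, by omega⟩)) (halfLen (t ⟨i + 1, hi⟩)) with hlt | heq | hgt
  · refine ⟨hmove n _ i hi t, hmove_mem_RedT ht i hi, .rel _ _ ⟨i, hi, rfl⟩, ?_⟩
    have hsum := sum_map_ofFn_hmove (fun x => (nf x).length) i hi t
    have hconj := length_nf_conj_lt_of_overlap ha hb hlt hov
    rw [inv_eq_self_of_mem_Refl ha] at hsum
    unfold totalLength
    omega
  · refine absurd (eq_of_overlap_of_halfLen_eq ha hb heq hov) ((injective_of_mem_RedT ht).ne ?_)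
    simp [Fin.ext_iff]
  · refine ⟨hmoveInv n _ i hi t, hmoveInv_mem_RedT ht i hi,
      .symm _ _ (.rel _ _ ⟨i, hi, (hmove_hmoveInv i hi t).symm⟩), ?_⟩
    have hsum := sum_map_ofFn_hmove (fun x => (nf x).length) i hi (hmoveInv n _ i hi t)
    have hconj := length_nf_conj_lt_of_overlap hb ha hgt hov.symm
    rw [hmove_hmoveInv, hmoveInv_apply_self, hmoveInv_apply_succ,
      show ∀ a b : UCox n, b * (b⁻¹ * a * b) * b⁻¹ = a from fun a b => by group,
      inv_eq_self_of_mem_Refl hb] at hsum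
    unfold totalLength
    omega

theorem eq_sgen_of_forall_not_overlap {t : Fin n → UCox n} (ht : t ∈ RedT n)
    (h : ∀ i (hi : i + 1 < n), ¬Overlap (t ⟨i, by omega⟩) (t ⟨i + 1, hi⟩)) :
    t = fun j => sgen j := by
  have hchain : (List.ofFn t).IsChain fun x y => ¬Overlap x y := by
    rw [List.isChain_iff_getElem]
    intro i hi
    simpa using h i (by simpa using hi)
  have hlen := add_two_mul_halfLen_le_length_nf_prod (List.ofFn t)
    (by simpa [List.mem_ofFn] using ht.1) hchain
  rw [ht.2, nf_coxElt, List.length_finRange, List.length_ofFn] at hlen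
  have hsgen : ∀ j, ∃ y, t j = sgen y := by
    intro j
    obtain ⟨U, y, hU⟩ := exists_nf_eq_of_mem_Refl (ht.1 j)
    have hU0 := hlen (t j) (List.mem_ofFn.2 ⟨j, rfl⟩)
    rw [halfLen_eq_of_nf_eq hU] at hU0
    obtain rfl : U = [] := List.eq_nil_of_length_eq_zero (by omega)
    exact ⟨y, by rw [← wordProd_nf (t j), hU]; simp⟩
  choose y hy using hsgen
  have hyinj : Function.Injective y := fun j j' hjj' =>
    injective_of_mem_RedT ht (by rw [hy, hy, hjj'])
  have hprod : wordProd (List.ofFn y) = coxElt n := by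
    rw [← ht.2, wordProd, List.map_ofFn]
    exact congrArg (fun f => (List.ofFn f).prod) (funext fun j => (hy j).symm)
  have hword : List.ofFn y = List.finRange n := by
    rw [← nf_wordProd (List.nodup_ofFn.2 hyinj).isChain, hprod, nf_coxElt]
  have hyid : y = id := List.ofFn_inj.1 (hword.trans (List.ofFn_id n).symm)
  funext j
  rw [hy, hyid, id]

theorem eqvGen_sgen_of_mem_RedT {t : Fin n → UCox n} (ht : t ∈ RedT n) :
    Relation.EqvGen (hstep n (UCox n)) t fun j => sgen j := by
  induction hN : totalLength t using Nat.strong_induction_on generalizing t with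
  | _ N ih =>
  by_cases hov : ∃ i, ∃ hi : i + 1 < n, Overlap (t ⟨i, by omega⟩) (t ⟨i + 1, hi⟩)
  · obtain ⟨i, hi, hov⟩ := hov
    obtain ⟨t', ht', htt', hlt⟩ := exists_totalLength_lt_of_overlap ht hi hov
    exact htt'.trans _ _ _ (ih _ (hN ▸ hlt) ht' rfl)
  · simp only [not_exists] at hov
    rw [eq_sgen_of_forall_not_overlap ht hov]
    exact .refl _

end UCox

/-- The Hurwitz action of `B_n` is transitive on `Red_T(c)`. -/
theorem hurwitz_transitive_RedT (n : ℕ) :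
    ∀ a ∈ RedT n, ∀ b ∈ RedT n, Relation.EqvGen (hstep n (UCox n)) a b :=
  fun _ ha _ hb =>
    (UCox.eqvGen_sgen_of_mem_RedT ha).trans _ _ _ (UCox.eqvGen_sgen_of_mem_RedT hb).symm
end
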